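/- For all σ, τ ∈ K̂₀, all u ∈ L²(ℱ)_τ and v ∈ L²(ℱ)_σ, every even integer s ≥ 0 and every integer m ≥ 0, one has |⟨T^m u, v⟩| ≤ C_s (c(σ)/c(τ))^{s/2} ‖(T*)^m‖_{H^s} ‖u‖₂ ‖v‖₂, where C_s > 0 is a constant depending only on s (and on G and the choices made) and ‖(T*)^m‖_{H^s} denotes the operator norm of (T*)^m on H^s(ℱ). -/

import Mathlib

open MeasureTheory
open scoped ENNReal RealInnerProductSpace

/-!
Move `T^m` across the inner product: `⟨T^m u, v⟩ = ⟨u, (T*)^m v⟩ = ⟨u, Q_τ (T*)^m v⟩` since `u`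
is `τ`-isotypic. The `τ`-component of `(T*)^m v` is one term of its squared `H^s` norm, which is
at most `M² c(σ)^s ‖v‖²` because `v` is `σ`-isotypic; hence
`‖Q_τ (T*)^m v‖ ≤ (c(σ)/c(τ))^{s/2} M ‖v‖`, and Cauchy–Schwarz finishes with `C_s = 1`.
-/

theorem ContinuousLinearMap.inner_pow_apply_eq_inner_pow_apply
    {E : Type*} [NormedAddCommGroup E] [InnerProductSpace ℝ E] {T Tstar : E →L[ℝ] E}
    (hadj : ∀ x y, ⟪T x, y⟫ = ⟪x, Tstar y⟫) (n : ℕ) (x y : E) :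
    ⟪(T ^ n) x, y⟫ = ⟪x, (Tstar ^ n) y⟫ := by
  induction n generalizing x with
  | zero => simp
  | succ n ih =>
    rw [pow_succ, pow_succ', mul_apply_eq_comp, mul_apply_eq_comp, ih, hadj]

lemma Real.rpow_div_two_sq {x : ℝ} (hx : 0 ≤ x) (s : ℕ) : (x ^ ((s : ℝ) / 2)) ^ 2 = x ^ s := by
  rw [← Real.rpow_mul_natCast hx, ← Real.rpow_natCast]
  push_cast
  ring_nf

section Sobolev

variable {E ι : Type*} [NormedAddCommGroup E] [InnerProductSpace ℝ E]
  {Q : ι → E →L[ℝ] E} {c : ι → ℝ} {s : ℕ}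

/-- The squared `H^s` norm `∑_τ c(τ)^s ‖Q_τ x‖²`, in `ℝ≥0∞` so that it needs no summability. -/
noncomputable def sobolevNormSq (Q : ι → E →L[ℝ] E) (c : ι → ℝ) (s : ℕ) (x : E) : ℝ≥0∞ :=
  ∑' τ, ENNReal.ofReal (c τ ^ s * ‖Q τ x‖ ^ 2)

lemma ofReal_le_sobolevNormSq (τ : ι) (x : E) :
    ENNReal.ofReal (c τ ^ s * ‖Q τ x‖ ^ 2) ≤ sobolevNormSq Q c s x :=
  ENNReal.le_tsum τ

lemma sobolevNormSq_of_apply_eq_self (hQ : ∀ τ τ', τ ≠ τ' → (Q τ).comp (Q τ') = 0) {σ : ι}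
    {v : E} (hv : Q σ v = v) : sobolevNormSq Q c s v = ENNReal.ofReal (c σ ^ s * ‖v‖ ^ 2) := by
  refine (tsum_eq_single σ fun τ hτ => ?_).trans (by rw [hv])
  have hzero : Q τ v = 0 := by
    rw [← hv, ← ContinuousLinearMap.comp_apply, hQ τ σ hτ, zero_apply]
  simp [hzero]

lemma norm_apply_apply_le_of_sobolevNormSq_le
    (hQ : ∀ τ τ', τ ≠ τ' → (Q τ).comp (Q τ') = 0) {τ σ : ι} (hcτ : 0 < c τ) (hcσ : 0 ≤ c σ)
    {A : E →L[ℝ] E} {M : ℝ} (hM : 0 ≤ M)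
    (hA : ∀ x, sobolevNormSq Q c s (A x) ≤ ENNReal.ofReal (M ^ 2) * sobolevNormSq Q c s x)
    {v : E} (hv : Q σ v = v) :
    ‖Q τ (A v)‖ ≤ (c σ / c τ) ^ ((s : ℝ) / 2) * M * ‖v‖ := by
  have hcomponent : c τ ^ s * ‖Q τ (A v)‖ ^ 2 ≤ M ^ 2 * (c σ ^ s * ‖v‖ ^ 2) := by
    refine (ENNReal.ofReal_le_ofReal_iff (by positivity)).mp ?_
    calc ENNReal.ofReal (c τ ^ s * ‖Q τ (A v)‖ ^ 2)
        ≤ ENNReal.ofReal (M ^ 2) * sobolevNormSq Q c s v :=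
          (ofReal_le_sobolevNormSq τ _).trans (hA v)
      _ = ENNReal.ofReal (M ^ 2 * (c σ ^ s * ‖v‖ ^ 2)) := by
          rw [sobolevNormSq_of_apply_eq_self hQ hv, ← ENNReal.ofReal_mul (by positivity)]
  refine (pow_le_pow_iff_left₀ (norm_nonneg _) (by positivity) two_ne_zero).mp ?_
  rw [mul_pow, mul_pow, Real.rpow_div_two_sq (by positivity), div_pow, div_mul_eq_mul_div,
    div_mul_eq_mul_div, le_div_iff₀ (by positivity)]
  linarith

end Sobolev

theorem statement11_general
    -- G : a connected non-compact simple Lie group with finite centre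
    (G : Type*) [Group G]
    -- the full flag manifold ℱ = G/P ≅ K/M with its K-invariant probability measure m
    (ℱ : Type*) [MeasurableSpace ℱ]
    [MulAction G ℱ]
    (m : Measure ℱ)
    -- the isotypic decomposition of L²(ℱ) under the identity component K₀ of K
    (ι : Type*) (Q : ι → (Lp ℝ 2 m →L[ℝ] Lp ℝ 2 m)) (c : ι → ℝ)
    (hc_one : ∀ τ, 1 ≤ c τ)
    (hQ_selfadj : ∀ (τ : ι) (u v : Lp ℝ 2 m), ⟪Q τ u, v⟫ = ⟪u, Q τ v⟫)
    (hQ_orth : ∀ τ τ' : ι, τ ≠ τ' → (Q τ).comp (Q τ') = 0) :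
    ∀ s : ℕ, Even s → ∃ C > (0 : ℝ),
      ∀ (S : Finset G) (w : G → ℝ≥0∞),
        -- μ = ∑_{g ∈ S} w g • δ_g is a probability measure with finite support S
        (∀ g ∈ S, w g ≠ 0) → (∑ g ∈ S, w g) = 1 →
        ∀ T Tstar : Lp ℝ 2 m →L[ℝ] Lp ℝ 2 m,
          -- T is the Markov operator of μ
          (∀ u : Lp ℝ 2 m, (T u : ℱ → ℝ) =ᵐ[m]
            fun ξ : ℱ => ∑ g ∈ S, (w g).toReal * u (g⁻¹ • ξ)) →
          -- Tstar is the L²(ℱ, m)-adjoint of T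
          (∀ u v : Lp ℝ 2 m, ⟪T u, v⟫ = ⟪u, Tstar v⟫) →
          ∀ (τ₁ τ₂ : ι) (u v : Lp ℝ 2 m) (m' : ℕ) (M : ℝ),
            -- u ∈ L²(ℱ)_{τ₁}, v ∈ L²(ℱ)_{τ₂}
            Q τ₁ u = u → Q τ₂ v = v →
            -- M is a bound for the operator norm of (T*)^{m'} on H^s
            0 ≤ M →
            (∀ x : Lp ℝ 2 m,
              (∑' τ : ι, ENNReal.ofReal (c τ ^ s * ‖Q τ ((Tstar ^ m') x)‖ ^ 2))
                ≤ ENNReal.ofReal (M ^ 2) * ∑' τ : ι, ENNReal.ofReal (c τ ^ s * ‖Q τ x‖ ^ 2)) →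
            |⟪(T ^ m') u, v⟫| ≤ C * (c τ₂ / c τ₁) ^ ((s : ℝ) / 2) * M * ‖u‖ * ‖v‖ := by
  intro s _
  refine ⟨1, one_pos, fun S w _ _ T Tstar _ hadj τ₁ τ₂ u v m' M hu hv hM hbound => ?_⟩
  have hcomponent := norm_apply_apply_le_of_sobolevNormSq_le hQ_orth
    (one_pos.trans_le (hc_one τ₁)) (zero_le_one.trans (hc_one τ₂)) hM hbound hv
  calc |⟪(T ^ m') u, v⟫| = |⟪u, Q τ₁ ((Tstar ^ m') v)⟫| := by
        rw [ContinuousLinearMap.inner_pow_apply_eq_inner_pow_apply hadj, ← hQ_selfadj, hu]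
    _ ≤ ‖u‖ * ‖Q τ₁ ((Tstar ^ m') v)‖ := abs_real_inner_le_norm _ _
    _ ≤ ‖u‖ * ((c τ₂ / c τ₁) ^ ((s : ℝ) / 2) * M * ‖v‖) := by gcongr
    _ = 1 * (c τ₂ / c τ₁) ^ ((s : ℝ) / 2) * M * ‖u‖ * ‖v‖ := by ring

theorem statement11
    -- G : a connected non-compact simple Lie group with finite centre
    (G : Type*) [Group G] [TopologicalSpace G] [IsTopologicalGroup G] [ConnectedSpace G]
    (hG_noncompact : ¬ CompactSpace G)
    (hG_finite_centre : Finite (Subgroup.center G))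
    -- a maximal compact subgroup K
    (K : Subgroup G) (hK_compact : IsCompact (K : Set G))
    -- the full flag manifold ℱ = G/P ≅ K/M with its K-invariant probability measure m
    (ℱ : Type*) [TopologicalSpace ℱ] [CompactSpace ℱ] [MeasurableSpace ℱ] [BorelSpace ℱ]
    [MulAction G ℱ]
    (haction : Continuous fun p : G × ℱ => p.1 • p.2)
    (hKtrans : ∀ x y : ℱ, ∃ k ∈ K, k • x = y)
    (m : Measure ℱ) [IsProbabilityMeasure m]
    (hm_inv : ∀ k ∈ K, Measure.map (fun x : ℱ => k • x) m = m)
    -- the isotypic decomposition of L²(ℱ) under the identity component K₀ of K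
    (ι : Type*) (Q : ι → (Lp ℝ 2 m →L[ℝ] Lp ℝ 2 m)) (c : ι → ℝ)
    (hc_one : ∀ τ, 1 ≤ c τ)
    (hQ_selfadj : ∀ (τ : ι) (u v : Lp ℝ 2 m), ⟪Q τ u, v⟫ = ⟪u, Q τ v⟫)
    (hQ_idem : ∀ τ : ι, (Q τ).comp (Q τ) = Q τ)
    (hQ_orth : ∀ τ τ' : ι, τ ≠ τ' → (Q τ).comp (Q τ') = 0)
    (hQ_complete : ∀ u : Lp ℝ 2 m, HasSum (fun τ : ι => Q τ u) u) :
    ∀ s : ℕ, Even s → ∃ C > (0 : ℝ),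
      ∀ (S : Finset G) (w : G → ℝ≥0∞),
        -- μ = ∑_{g ∈ S} w g • δ_g is a probability measure with finite support S
        (∀ g ∈ S, w g ≠ 0) → (∑ g ∈ S, w g) = 1 →
        ∀ T Tstar : Lp ℝ 2 m →L[ℝ] Lp ℝ 2 m,
          -- T is the Markov operator of μ
          (∀ u : Lp ℝ 2 m, (T u : ℱ → ℝ) =ᵐ[m]
            fun ξ : ℱ => ∑ g ∈ S, (w g).toReal * u (g⁻¹ • ξ)) →
          -- Tstar is the L²(ℱ, m)-adjoint of T
          (∀ u v : Lp ℝ 2 m, ⟪T u, v⟫ = ⟪u, Tstar v⟫) →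
          ∀ (τ₁ τ₂ : ι) (u v : Lp ℝ 2 m) (m' : ℕ) (M : ℝ),
            -- u ∈ L²(ℱ)_{τ₁}, v ∈ L²(ℱ)_{τ₂}
            Q τ₁ u = u → Q τ₂ v = v →
            -- M is a bound for the operator norm of (T*)^{m'} on H^s
            0 ≤ M →
            (∀ x : Lp ℝ 2 m,
              (∑' τ : ι, ENNReal.ofReal (c τ ^ s * ‖Q τ ((Tstar ^ m') x)‖ ^ 2))
                ≤ ENNReal.ofReal (M ^ 2) * ∑' τ : ι, ENNReal.ofReal (c τ ^ s * ‖Q τ x‖ ^ 2)) →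
            |⟪(T ^ m') u, v⟫| ≤ C * (c τ₂ / c τ₁) ^ ((s : ℝ) / 2) * M * ‖u‖ * ‖v‖ :=
  statement11_general G ℱ m ι Q c hc_one hQ_selfadj hQ_orth
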